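/- Let F be a field of prime characteristic p > 0, let λ ∈ F with λ ≠ 0, and let A ∈ F^{n×n}. Suppose the characteristic polynomial of A factors over F as c_A(t) = (t−α)^m · f(t) where f(α)·f(λα)·f(λ⁻¹α) ≠ 0. Then A is conjugate over F to a block diagonal matrix diag(A₁, A₂) where A₁ has characteristic polynomial (t−α)^m and A₂ has characteristic polynomial f(t), and C_F(A,λ) is isomorphic as an F-vector space to C_F(A₁,λ) ⊕ C_F(A₂,λ). -/

import Mathlib

/-!
Since `f(α) ≠ 0`, the factors `(X - α)^m` and `f` of `χ_A` are coprime, so `F^n` splits into the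
`A`-invariant subspaces `ker (A - α)^m` and `ker f(A)`, on which `A` has characteristic polynomials
`(X - α)^m` and `f`; in an adapted basis `A = diag(A₁, A₂)`.
A matrix `B` with `AB = λBA` then has off-diagonal blocks solving `A₁ Y = λ Y A₂` and
`A₂ Y = λ Y A₁`. In the first, `λ⁻¹A₁` is killed by `(X - λ⁻¹α)^m` and `A₂` by `f`; these are
coprime because `f(λ⁻¹α) ≠ 0`, and Sylvester's argument gives `Y = 0`. The second is symmetric,
using `f(λα) ≠ 0`. So the twisted centralizer of `A` is that of `diag(A₁, A₂)`, which is the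
product of those of `A₁` and `A₂`.
-/

open Matrix Module Polynomial

/-- The twisted centralizer code `C_F(A,λ) = {B | A*B - λ*B*A = 0}`. -/
noncomputable def twistedCentralizer {F : Type*} [Field F] {m : Type*} [Fintype m] [DecidableEq m]
    (A : Matrix m m F) (lam : F) : Submodule F (Matrix m m F) :=
  LinearMap.ker (LinearMap.mulLeft F A - lam • LinearMap.mulRight F A)

namespace Polynomial

theorem isCoprime_X_sub_C_pow_of_not_isRoot {K : Type*} [Field K] {a : K} {p : K[X]}
    (h : ¬ p.IsRoot a) (m : ℕ) : IsCoprime ((X - C a) ^ m) p :=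
  ((prime_X_sub_C a).coprime_iff_not_dvd.mpr (mt dvd_iff_isRoot.mp h)).pow_left

theorem eq_and_eq_of_X_sub_C_pow_mul_eq {R : Type*} [CommRing R] [IsDomain R] {a : R} {i j : ℕ}
    {p q : R[X]} (hp : ¬ p.IsRoot a) (hq : ¬ q.IsRoot a)
    (h : (X - C a) ^ i * p = (X - C a) ^ j * q) : i = j ∧ p = q := by
  have hmult : ∀ {k : ℕ} {r : R[X]}, ¬ r.IsRoot a → rootMultiplicity a ((X - C a) ^ k * r) = k :=
    fun {k r} hr => by
      rw [mul_comm, rootMultiplicity_mul_X_sub_C_pow (fun h0 => hr (by simp [h0])),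
        rootMultiplicity_eq_zero hr, zero_add]
  obtain rfl : i = j := (hmult hp).symm.trans (h ▸ hmult hq)
  exact ⟨rfl, mul_left_cancel₀ (pow_ne_zero _ (X_sub_C_ne_zero a)) h⟩

theorem aeval_smul_X_sub_C_pow {R A : Type*} [CommRing R] [Ring A] [Algebra R A]
    (c a : R) (x : A) (m : ℕ) :
    aeval (c • x) ((X - C (c * a)) ^ m) = c ^ m • aeval x ((X - C a) ^ m) := by
  simp only [map_pow, map_sub, aeval_X, aeval_C, Algebra.algebraMap_eq_smul_one, mul_smul]
  rw [← smul_sub, _root_.smul_pow]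

end Polynomial

namespace Matrix

variable {R : Type*} [CommRing R] {ι κ : Type*} [Fintype ι] [DecidableEq ι]
  [Fintype κ] [DecidableEq κ]

theorem aeval_mul_eq_mul_aeval {A : Matrix ι ι R} {B : Matrix κ κ R} {Y : Matrix ι κ R}
    (hY : A * Y = Y * B) (p : R[X]) : aeval A p * Y = Y * aeval B p := by
  have hpow : ∀ i : ℕ, A ^ i * Y = Y * B ^ i := fun i => by
    induction i with
    | zero => simp
    | succ i ih => rw [pow_succ, pow_succ, Matrix.mul_assoc, hY, ← Matrix.mul_assoc, ih,
        Matrix.mul_assoc]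
  simp only [aeval_eq_sum_range, Matrix.sum_mul, Matrix.mul_sum, Matrix.smul_mul,
    Matrix.mul_smul, hpow]

theorem eq_zero_of_mul_eq_mul_of_isCoprime {A : Matrix ι ι R} {B : Matrix κ κ R}
    {Y : Matrix ι κ R} {p q : R[X]} (hY : A * Y = Y * B) (hA : aeval A p = 0)
    (hB : aeval B q = 0) (hpq : IsCoprime p q) : Y = 0 := by
  obtain ⟨u, v, huv⟩ := hpq
  have hinv : aeval B (p * u) = 1 := by
    have h := congrArg (aeval B) huv
    rwa [map_add, map_mul (aeval B) v, hB, mul_zero, add_zero, map_one, mul_comm] at h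
  calc Y = Y * aeval B (p * u) := by rw [hinv, Matrix.mul_one]
    _ = 0 := by rw [map_mul, ← Matrix.mul_assoc, ← aeval_mul_eq_mul_aeval hY, hA, Matrix.zero_mul,
      Matrix.zero_mul]

section Field

variable {K : Type*} [Field K] {ι κ : Type*} [Fintype ι] [DecidableEq ι] [Fintype κ]
  [DecidableEq κ] {A : Matrix ι ι K} {B : Matrix κ κ K} {Y : Matrix ι κ K} {c a : K} {m : ℕ}
  {f : K[X]}

theorem eq_zero_of_mul_eq_smul_mul_of_not_isRoot_inv_mul (hc : c ≠ 0)
    (hA : aeval A ((X - C a) ^ m) = 0) (hB : aeval B f = 0) (hf : ¬ f.IsRoot (c⁻¹ * a))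
    (hY : A * Y = c • (Y * B)) : Y = 0 := by
  refine eq_zero_of_mul_eq_mul_of_isCoprime (A := c⁻¹ • A) ?_ ?_ hB
    (isCoprime_X_sub_C_pow_of_not_isRoot hf m)
  · rw [Matrix.smul_mul, hY, smul_smul, inv_mul_cancel₀ hc, one_smul]
  · rw [aeval_smul_X_sub_C_pow, hA, smul_zero]

theorem eq_zero_of_mul_eq_smul_mul_of_not_isRoot_mul (hA : aeval A f = 0)
    (hB : aeval B ((X - C a) ^ m) = 0) (hf : ¬ f.IsRoot (c * a)) (hY : A * Y = c • (Y * B)) :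
    Y = 0 :=
  eq_zero_of_mul_eq_mul_of_isCoprime (B := c • B) (by rw [hY, Matrix.mul_smul]) hA
    (by rw [aeval_smul_X_sub_C_pow, hB, smul_zero]) (isCoprime_X_sub_C_pow_of_not_isRoot hf m).symm

end Field

end Matrix

theorem LinearMap.toMatrix_reindex {R M₁ M₂ : Type*} [CommRing R] [AddCommGroup M₁] [Module R M₁]
    [AddCommGroup M₂] [Module R M₂] {ι ι' κ κ' : Type*} [Fintype ι] [DecidableEq ι] [Fintype ι']
    [DecidableEq ι'] [Fintype κ] [Fintype κ'] (b₁ : Basis ι R M₁) (b₂ : Basis κ R M₂)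
    (e₁ : ι ≃ ι') (e₂ : κ ≃ κ') (φ : M₁ →ₗ[R] M₂) :
    toMatrix (b₁.reindex e₁) (b₂.reindex e₂) φ = reindex e₂ e₁ (toMatrix b₁ b₂ φ) := by
  ext i j
  simp [LinearMap.toMatrix_apply]

theorem Matrix.exists_units_conj_eq_reindex_toMatrix {R : Type*} [CommRing R] {ι κ : Type*}
    [Fintype ι] [DecidableEq ι] [Fintype κ] [DecidableEq κ] (A : Matrix ι ι R)
    (b : Basis κ R (ι → R)) (e : κ ≃ ι) :
    ∃ P : (Matrix ι ι R)ˣ, (P : Matrix ι ι R) * A * (↑P⁻¹ : Matrix ι ι R) =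
      reindex e e (LinearMap.toMatrix b b (toLin' A)) := by
  let c := b.reindex e
  let s := Pi.basisFun R ι
  refine ⟨⟨c.toMatrix s, s.toMatrix c, c.toMatrix_mul_toMatrix_flip s,
    s.toMatrix_mul_toMatrix_flip c⟩, ?_⟩
  change c.toMatrix s * A * s.toMatrix c = _
  rw [← LinearMap.toMatrix_reindex,
    ← basis_toMatrix_mul_linearMap_toMatrix_mul_basis_toMatrix c s c s,
    LinearMap.toMatrix_eq_toMatrix', LinearMap.toMatrix'_toLin']

theorem LinearMap.toMatrix_map_prodEquivOfIsCompl {R M : Type*} [CommRing R] [AddCommGroup M]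
    [Module R M] {ι κ : Type*} [Fintype ι] [DecidableEq ι] [Fintype κ] [DecidableEq κ]
    {p q : Submodule R M} (h : IsCompl p q) (φ : Module.End R M) (hp : ∀ x ∈ p, φ x ∈ p)
    (hq : ∀ x ∈ q, φ x ∈ q) (bp : Basis ι R p) (bq : Basis κ R q) :
    toMatrix ((bp.prod bq).map (p.prodEquivOfIsCompl q h))
        ((bp.prod bq).map (p.prodEquivOfIsCompl q h)) φ =
      fromBlocks (toMatrix bp bp (φ.restrict hp)) 0 0 (toMatrix bq bq (φ.restrict hq)) := by
  rw [toMatrix_map_left, toMatrix_map_right, ← toMatrix_prodMap]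
  congr 1
  ext x <;> simp [hp, hq]

namespace Module.End

variable {R M : Type*} [CommRing R] [AddCommGroup M] [Module R M]

theorem mapsTo_ker_aeval (φ : Module.End R M) (q : R[X]) :
    ∀ x ∈ LinearMap.ker (aeval φ q), φ x ∈ LinearMap.ker (aeval φ q) := by
  intro x hx
  rw [LinearMap.mem_ker] at hx ⊢
  have hcomm : Commute (aeval φ q) φ := by simpa using (Commute.all q X).map (aeval φ)
  rw [← Module.End.mul_apply, hcomm.eq, Module.End.mul_apply, hx, map_zero]

theorem aeval_restrict_apply (φ : Module.End R M) {p : Submodule R M} (h : ∀ x ∈ p, φ x ∈ p)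
    (q : R[X]) (x : p) : (aeval (φ.restrict h) q x : M) = aeval φ q x := by
  simp [aeval_eq_sum_range, Module.End.pow_restrict _ h]

theorem aeval_restrict_ker_aeval (φ : Module.End R M) (q : R[X]) :
    aeval (φ.restrict (mapsTo_ker_aeval φ q)) q = 0 :=
  LinearMap.ext fun x => Subtype.ext <| (aeval_restrict_apply φ _ q x).trans x.2

theorem isCompl_ker_aeval_of_isCoprime (φ : Module.End R M) {p q : R[X]} (hpq : IsCoprime p q)
    (h : aeval φ (p * q) = 0) : IsCompl (LinearMap.ker (aeval φ p)) (LinearMap.ker (aeval φ q)) :=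
  ⟨disjoint_ker_aeval_of_isCoprime φ hpq, codisjoint_iff.2 <| by
    rw [sup_ker_aeval_eq_ker_aeval_mul_of_coprime φ hpq, h, LinearMap.ker_zero]⟩

end Module.End

namespace LinearMap

variable {K V : Type*} [Field K] [AddCommGroup V] [Module K V] [FiniteDimensional K V]

theorem charpoly_eq_X_sub_C_pow_of_aeval_eq_zero {ψ : Module.End K V} {a : K} {m : ℕ}
    (h : aeval ψ ((X - C a) ^ m) = 0) : ψ.charpoly = (X - C a) ^ finrank K V := by
  have hnil : IsNilpotent (ψ - a • 1) :=
    ⟨m, by simpa [Algebra.algebraMap_eq_smul_one] using h⟩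
  have hshift := hnil.charpoly_eq_X_pow_finrank
  rw [charpoly_sub_smul] at hshift
  calc ψ.charpoly = (ψ.charpoly.comp (X + C a)).comp (X - C a) := by
        rw [Polynomial.comp_assoc, Polynomial.add_comp, X_comp, C_comp, sub_add_cancel, comp_X]
    _ = (X - C a) ^ finrank K V := by rw [hshift, X_pow_comp]

theorem not_isRoot_charpoly_of_aeval_eq_zero {ψ : Module.End K V} {f : K[X]}
    (h : aeval ψ f = 0) {a : K} (ha : ¬ f.IsRoot a) : ¬ ψ.charpoly.IsRoot a := by
  rw [← Module.End.hasEigenvalue_iff_isRoot_charpoly]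
  intro hev
  obtain ⟨v, hv⟩ := hev.exists_hasEigenvector
  have hfv := Module.End.aeval_apply_of_hasEigenvector hv (p := f)
  rw [h, LinearMap.zero_apply, eq_comm, smul_eq_zero] at hfv
  exact hfv.elim ha hv.2

theorem exists_basis_toMatrix_eq_fromBlocks (φ : Module.End K V) {a : K} {m : ℕ} {f : K[X]}
    (hφ : φ.charpoly = (X - C a) ^ m * f) (hf : ¬ f.IsRoot a) :
    ∃ (k : ℕ) (b : Basis (Fin m ⊕ Fin k) K V) (A₁ : Matrix (Fin m) (Fin m) K)
      (A₂ : Matrix (Fin k) (Fin k) K),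
      toMatrix b b φ = fromBlocks A₁ 0 0 A₂ ∧ A₁.charpoly = (X - C a) ^ m ∧ A₂.charpoly = f := by
  have hK := Module.End.isCompl_ker_aeval_of_isCoprime φ (isCoprime_X_sub_C_pow_of_not_isRoot hf m)
    (hφ ▸ φ.aeval_self_charpoly)
  set K₁ := ker (aeval φ ((X - C a) ^ m))
  set K₂ := ker (aeval φ f)
  have h₁ := Module.End.mapsTo_ker_aeval φ ((X - C a) ^ m)
  have h₂ := Module.End.mapsTo_ker_aeval φ f
  set ψ₁ := φ.restrict h₁
  set ψ₂ := φ.restrict h₂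
  have hψ₁ : ψ₁.charpoly = (X - C a) ^ finrank K K₁ :=
    charpoly_eq_X_sub_C_pow_of_aeval_eq_zero (Module.End.aeval_restrict_ker_aeval φ _)
  have hψ₂ : ¬ ψ₂.charpoly.IsRoot a :=
    not_isRoot_charpoly_of_aeval_eq_zero (Module.End.aeval_restrict_ker_aeval φ f) hf
  have hblocks := toMatrix_map_prodEquivOfIsCompl hK φ h₁ h₂ (Module.finBasis K K₁)
    (Module.finBasis K K₂)
  have hprod : (X - C a) ^ finrank K K₁ * ψ₂.charpoly = (X - C a) ^ m * f := by
    rw [← hφ, ← hψ₁, ← charpoly_toMatrix φ (_ : Basis (Fin _ ⊕ Fin _) K V), hblocks,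
      charpoly_fromBlocks_zero₁₂, charpoly_toMatrix, charpoly_toMatrix]
  obtain ⟨hd, hψ₂f⟩ := eq_and_eq_of_X_sub_C_pow_mul_eq hψ₂ hf hprod
  let b₁ := Module.finBasisOfFinrankEq K K₁ hd
  refine ⟨_, _, _, _, toMatrix_map_prodEquivOfIsCompl hK φ h₁ h₂ b₁ (Module.finBasis K K₂), ?_, ?_⟩
  · rw [charpoly_toMatrix, hψ₁, hd]
  · rw [charpoly_toMatrix, hψ₂f]

end LinearMap

section TwistedCentralizer

variable {F : Type*} [Field F] {ι κ : Type*} [Fintype ι] [DecidableEq ι] [Fintype κ]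
  [DecidableEq κ]

theorem mem_twistedCentralizer_iff {A B : Matrix ι ι F} {lam : F} :
    B ∈ twistedCentralizer A lam ↔ A * B = lam • (B * A) := by
  rw [twistedCentralizer, LinearMap.mem_ker, LinearMap.sub_apply, LinearMap.smul_apply,
    LinearMap.mulLeft_apply, LinearMap.mulRight_apply, sub_eq_zero]

theorem twistedCentralizer_map_algEquiv (σ : Matrix ι ι F ≃ₐ[F] Matrix κ κ F)
    (A : Matrix ι ι F) (lam : F) :
    (twistedCentralizer A lam).map σ.toLinearMap = twistedCentralizer (σ A) lam := by
  ext B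
  rw [Submodule.mem_map_equiv, mem_twistedCentralizer_iff, mem_twistedCentralizer_iff,
    ← σ.symm.injective.eq_iff, map_mul, map_smul, map_mul, σ.symm_apply_apply]
  rfl

noncomputable def twistedCentralizerEquivOfAlgEquiv (σ : Matrix ι ι F ≃ₐ[F] Matrix κ κ F)
    (A : Matrix ι ι F) (lam : F) :
    twistedCentralizer A lam ≃ₗ[F] twistedCentralizer (σ A) lam :=
  (σ.toLinearEquiv.submoduleMap _).trans
    (LinearEquiv.ofEq _ _ (twistedCentralizer_map_algEquiv σ A lam))

theorem fromBlocks_mem_twistedCentralizer_fromBlocks_iff {A₁ : Matrix ι ι F}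
    {A₂ : Matrix κ κ F} {lam : F} {B₁₁ : Matrix ι ι F} {B₁₂ : Matrix ι κ F}
    {B₂₁ : Matrix κ ι F} {B₂₂ : Matrix κ κ F} :
    fromBlocks B₁₁ B₁₂ B₂₁ B₂₂ ∈ twistedCentralizer (fromBlocks A₁ 0 0 A₂) lam ↔
      B₁₁ ∈ twistedCentralizer A₁ lam ∧ A₁ * B₁₂ = lam • (B₁₂ * A₂) ∧
        A₂ * B₂₁ = lam • (B₂₁ * A₁) ∧ B₂₂ ∈ twistedCentralizer A₂ lam := by
  simp only [mem_twistedCentralizer_iff, fromBlocks_multiply, fromBlocks_smul, fromBlocks_inj,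
    Matrix.zero_mul, Matrix.mul_zero, add_zero, zero_add]

variable {A₁ : Matrix ι ι F} {A₂ : Matrix κ κ F} {lam : F}

noncomputable def twistedCentralizerFromBlocksEquiv
    (h₁₂ : ∀ Y : Matrix ι κ F, A₁ * Y = lam • (Y * A₂) → Y = 0)
    (h₂₁ : ∀ Y : Matrix κ ι F, A₂ * Y = lam • (Y * A₁) → Y = 0) :
    twistedCentralizer (fromBlocks A₁ 0 0 A₂) lam ≃ₗ[F]
      twistedCentralizer A₁ lam × twistedCentralizer A₂ lam where
  toFun B := by
    have hB := B.2
    rw [← fromBlocks_toBlocks B.1, fromBlocks_mem_twistedCentralizer_fromBlocks_iff] at hB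
    exact (⟨_, hB.1⟩, ⟨_, hB.2.2.2⟩)
  invFun X := ⟨fromBlocks X.1 0 0 X.2,
    fromBlocks_mem_twistedCentralizer_fromBlocks_iff.2 ⟨X.1.2, by simp, by simp, X.2.2⟩⟩
  left_inv B := by
    have hB := B.2
    rw [← fromBlocks_toBlocks B.1, fromBlocks_mem_twistedCentralizer_fromBlocks_iff] at hB
    ext1
    conv_rhs => rw [← fromBlocks_toBlocks B.1, h₁₂ _ hB.2.1, h₂₁ _ hB.2.2.1]
  right_inv X := by ext <;> simp
  map_add' _ _ := rfl
  map_smul' _ _ := rfl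

end TwistedCentralizer

theorem twistedCentralizer_primary_decomposition_general {F : Type*} [Field F] {n : ℕ} (lam α : F)
    (hlam : lam ≠ 0)
    (A : Matrix (Fin n) (Fin n) F) (m : ℕ) (f : F[X])
    (hfac : A.charpoly = (X - C α) ^ m * f)
    (hf : f.eval α * f.eval (lam * α) * f.eval (lam⁻¹ * α) ≠ 0) :
    ∃ (k : ℕ) (A₁ : Matrix (Fin m) (Fin m) F) (A₂ : Matrix (Fin k) (Fin k) F)
      (e : (Fin m ⊕ Fin k) ≃ Fin n) (P : (Matrix (Fin n) (Fin n) F)ˣ),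
      (P : Matrix (Fin n) (Fin n) F) * A * (↑P⁻¹ : Matrix (Fin n) (Fin n) F) =
        Matrix.reindex e e (Matrix.fromBlocks A₁ 0 0 A₂) ∧
      A₁.charpoly = (X - C α) ^ m ∧ A₂.charpoly = f ∧
      Nonempty ((twistedCentralizer A lam) ≃ₗ[F]
        (twistedCentralizer A₁ lam × twistedCentralizer A₂ lam)) := by
  obtain ⟨⟨hfα, hfl⟩, hfli⟩ :
      (¬ f.IsRoot α ∧ ¬ f.IsRoot (lam * α)) ∧ ¬ f.IsRoot (lam⁻¹ * α) := by
    simpa only [mul_ne_zero_iff, IsRoot.def] using hf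
  obtain ⟨k, b, A₁, A₂, hb, hA₁, hA₂⟩ :=
    (toLin' A).exists_basis_toMatrix_eq_fromBlocks (by rwa [Matrix.charpoly_toLin']) hfα
  obtain ⟨P, hP⟩ :=
    A.exists_units_conj_eq_reindex_toMatrix b (b.indexEquiv (Pi.basisFun F (Fin n)))
  refine ⟨k, A₁, A₂, _, P, hb ▸ hP, hA₁, hA₂, ⟨?_⟩⟩
  have h₁ := hA₁ ▸ aeval_self_charpoly A₁
  have h₂ := hA₂ ▸ aeval_self_charpoly A₂
  let σ := toLinAlgEquiv'.trans (LinearMap.toMatrixAlgEquiv b)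
  exact (twistedCentralizerEquivOfAlgEquiv σ A lam).trans <|
    (LinearEquiv.ofEq _ _ (congrArg (twistedCentralizer · lam) hb)).trans <|
      twistedCentralizerFromBlocksEquiv
        (fun _ => eq_zero_of_mul_eq_smul_mul_of_not_isRoot_inv_mul hlam h₁ h₂ hfli)
        (fun _ => eq_zero_of_mul_eq_smul_mul_of_not_isRoot_mul h₂ h₁ hfl)

theorem twistedCentralizer_primary_decomposition {F : Type*} [Field F] {p : ℕ} [Fact p.Prime]
    [CharP F p] {n : ℕ} (lam α : F) (hlam : lam ≠ 0)
    (A : Matrix (Fin n) (Fin n) F) (m : ℕ) (f : F[X])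
    (hfac : A.charpoly = (X - C α) ^ m * f)
    (hf : f.eval α * f.eval (lam * α) * f.eval (lam⁻¹ * α) ≠ 0) :
    ∃ (k : ℕ) (A₁ : Matrix (Fin m) (Fin m) F) (A₂ : Matrix (Fin k) (Fin k) F)
      (e : (Fin m ⊕ Fin k) ≃ Fin n) (P : (Matrix (Fin n) (Fin n) F)ˣ),
      (P : Matrix (Fin n) (Fin n) F) * A * (↑P⁻¹ : Matrix (Fin n) (Fin n) F) =
        Matrix.reindex e e (Matrix.fromBlocks A₁ 0 0 A₂) ∧
      A₁.charpoly = (X - C α) ^ m ∧ A₂.charpoly = f ∧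
      Nonempty ((twistedCentralizer A lam) ≃ₗ[F]
        (twistedCentralizer A₁ lam × twistedCentralizer A₂ lam)) :=
  twistedCentralizer_primary_decomposition_general lam α hlam A m f hfac hf
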